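/- Let n and b be nonzero integers, let g = gcd(n, b), q_n = n/g, q_b = b/g, and let γ ∈ 𝕋 be an element of order |n| in the circle group. Then the map Φ′ : Fin g × 𝕋 → 𝕋 × 𝕋 defined by Φ′(k, z) = (γ^k · z^{q_b}, z^{q_n}) is injective, its range is exactly S = {(z₁, z₂) ∈ 𝕋 × 𝕋 : z₁ⁿ = z₂ᵇ}, and Φ′ induces a homeomorphism from Fin g × 𝕋 onto S, where S carries the subspace topology of 𝕋 × 𝕋. -/

import Mathlib

open Subgroup

lemma circle_exp_zpow (m : ℤ) (x : ℝ) : Circle.exp (m * x) = Circle.exp x ^ m := by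
  have := map_zsmul Circle.expHom m x
  simpa [zsmul_eq_mul] using this

lemma circle_zpow_surj {m : ℤ} (hm : m ≠ 0) : Function.Surjective (fun z : Circle => z ^ m) := by
  intro z
  refine ⟨Circle.exp (Complex.arg z / m), ?_⟩
  have : (m : ℝ) ≠ 0 := Int.cast_ne_zero.mpr hm
  simp only [← circle_exp_zpow, mul_div_cancel₀ _ this, Circle.exp_arg]

lemma circle_mem_zpowers {N : ℕ} (hN : N ≠ 0) (γ : Circle) (hγ : orderOf γ = N)
    {z : Circle} (hz : z ^ N = 1) : ∃ j : ℤ, γ ^ j = z := by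
  set T : Set Circle := {z : Circle | z ^ N = 1} with hT
  set C : Set ℂ := {x : ℂ | x ^ N = 1} with hC
  have hCeq : C = ↑(Polynomial.nthRoots N (1 : ℂ)).toFinset := by
    ext x
    simp [hC, Polynomial.mem_nthRoots (Nat.pos_of_ne_zero hN)]
  have hCfin : C.Finite := by rw [hCeq]; exact (Polynomial.nthRoots N (1:ℂ)).toFinset.finite_toSet
  have hCcard : C.ncard ≤ N := by
    rw [hCeq, Set.ncard_coe_finset]
    exact le_trans (Multiset.toFinset_card_le _) (Polynomial.card_nthRoots N 1)
  have hinj : Function.Injective (fun z : Circle => (z : ℂ)) := fun a b h => Subtype.ext h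
  have hTC : T = (fun z : Circle => (z : ℂ)) ⁻¹' C := by
    ext z
    simp only [hT, hC, Set.mem_preimage, Set.mem_setOf_eq]
    constructor
    · intro h
      have : ((z ^ N : Circle) : ℂ) = ((1 : Circle) : ℂ) := by rw [h]
      push_cast at this
      exact this
    · intro h
      refine Subtype.ext ?_
      push_cast
      exact h
  have hTfin : T.Finite := by rw [hTC]; exact hCfin.preimage hinj.injOn
  have hTcard : T.ncard ≤ N := by
    have h1 : ((fun z : Circle => (z : ℂ)) '' T).ncard = T.ncard :=
      Set.ncard_image_of_injective _ hinj
    have h2 : ((fun z : Circle => (z : ℂ)) '' T) ⊆ C := by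
      rw [hTC]; exact Set.image_preimage_subset _ _
    calc T.ncard = _ := h1.symm
    _ ≤ C.ncard := Set.ncard_le_ncard h2 hCfin
    _ ≤ N := hCcard
  have hsub : (Subgroup.zpowers γ : Set Circle) ⊆ T := by
    rintro _ ⟨j, rfl⟩
    show (γ ^ j) ^ (N : ℕ) = 1
    rw [← zpow_natCast, ← zpow_mul, mul_comm, zpow_mul, zpow_natCast, ← hγ,
      pow_orderOf_eq_one, one_zpow]
  have hzcard : (Subgroup.zpowers γ : Set Circle).ncard = N := by
    rw [← Nat.card_coe_set_eq]
    simp [hγ, Nat.card_zpowers γ]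
  have heq : (Subgroup.zpowers γ : Set Circle) = T :=
    Set.eq_of_subset_of_ncard_le hsub (by rw [hzcard]; exact hTcard) hTfin
  have : z ∈ (Subgroup.zpowers γ : Set Circle) := by rw [heq]; exact hz
  exact Subgroup.mem_zpowers_iff.mp this
/-- For nonzero integers `n, b` with `g = gcd(n, b)`, `q_n = n / g`, `q_b = b / g`, and `γ` a
primitive `|n|`-th root of unity in the circle group, the map
`Φ′(k, z) = (γ ^ k * z ^ q_b, z ^ q_n)` from `Fin g × 𝕋` to `𝕋 × 𝕋` is injective, has range
`S = {(z₁, z₂) | z₁ ^ n = z₂ ^ b}`, and induces a homeomorphism from `Fin g × 𝕋` onto `S`. -/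
theorem statement_13 (n b : ℤ) (hn : n ≠ 0) (hb : b ≠ 0) (γ : Circle)
    (hγ : orderOf γ = n.natAbs) :
    Function.Injective (fun p : Fin (Int.gcd n b) × Circle =>
      ((γ ^ (p.1 : ℕ) * p.2 ^ (b / (Int.gcd n b : ℤ)), p.2 ^ (n / (Int.gcd n b : ℤ))) :
        Circle × Circle)) ∧
    Set.range (fun p : Fin (Int.gcd n b) × Circle =>
      ((γ ^ (p.1 : ℕ) * p.2 ^ (b / (Int.gcd n b : ℤ)), p.2 ^ (n / (Int.gcd n b : ℤ))) :
        Circle × Circle)) = {z : Circle × Circle | z.1 ^ n = z.2 ^ b} ∧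
    ∃ H : Fin (Int.gcd n b) × Circle ≃ₜ {z : Circle × Circle // z.1 ^ n = z.2 ^ b},
      ∀ p : Fin (Int.gcd n b) × Circle,
        ((H p : {z : Circle × Circle // z.1 ^ n = z.2 ^ b}) : Circle × Circle) =
          (γ ^ (p.1 : ℕ) * p.2 ^ (b / (Int.gcd n b : ℤ)), p.2 ^ (n / (Int.gcd n b : ℤ))) := by
  have hg0 : 0 < Int.gcd n b := Int.gcd_pos_iff.mpr (Or.inl hn)
  set g : ℤ := (Int.gcd n b : ℤ) with hgdef
  have hgz : g ≠ 0 := by rw [hgdef]; exact_mod_cast hg0.ne'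
  have hgpos : 0 < g := by rw [hgdef]; exact_mod_cast hg0
  set qn : ℤ := n / g with hqndef
  set qb : ℤ := b / g with hqbdef
  have hgn : g * qn = n := Int.mul_ediv_cancel' (Int.gcd_dvd_left n b)
  have hgb : g * qb = b := Int.mul_ediv_cancel' (Int.gcd_dvd_right n b)
  have hqn : qn ≠ 0 := by rintro h; rw [h, mul_zero] at hgn; exact hn hgn.symm
  have hqb : qb ≠ 0 := by rintro h; rw [h, mul_zero] at hgb; exact hb hgb.symm
  have hcop : IsCoprime qn qb := by
    rw [Int.isCoprime_iff_gcd_eq_one]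
    exact Int.gcd_div_gcd_div_gcd hg0
  clear_value g qn qb
  have hNz : n.natAbs ≠ 0 := Int.natAbs_ne_zero.mpr hn
  have hdvd : ∀ m : ℤ, γ ^ m = 1 ↔ n ∣ m := by
    intro m
    rw [← orderOf_dvd_iff_zpow_eq_one, hγ, Int.natAbs_dvd]
  have hcomm : qn * b = qb * n := by rw [← hgn, ← hgb]; ring
  set φ := fun p : Fin (Int.gcd n b) × Circle =>
    ((γ ^ (p.1 : ℕ) * p.2 ^ qb, p.2 ^ qn) : Circle × Circle) with hφ
  -- injectivity
  have hinj : Function.Injective φ := by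
    rintro ⟨k, z⟩ ⟨k', w⟩ h
    simp only [hφ, Prod.mk.injEq] at h
    obtain ⟨h1, h2⟩ := h
    have h1' : γ ^ ((k : ℕ) : ℤ) * z ^ qb = γ ^ ((k' : ℕ) : ℤ) * w ^ qb := by
      rw [zpow_natCast, zpow_natCast]; exact h1
    set u : Circle := z / w with hu
    have hun : u ^ qn = 1 := by rw [hu, div_zpow, h2, div_self']
    have key : γ ^ (((k : ℕ) : ℤ) - ((k' : ℕ) : ℤ)) * u ^ qb = 1 := by
      calc γ ^ (((k : ℕ) : ℤ) - ((k' : ℕ) : ℤ)) * u ^ qb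
          = (γ ^ ((k : ℕ) : ℤ) * z ^ qb) / (γ ^ ((k' : ℕ) : ℤ) * w ^ qb) := by
            rw [hu, div_zpow, zpow_sub, ← div_eq_mul_inv, div_mul_div_comm]
      _ = 1 := by rw [h1', div_self']
    have hd0 : ((k : ℕ) : ℤ) - ((k' : ℕ) : ℤ) = 0 := by
      have h3 : γ ^ ((((k : ℕ) : ℤ) - ((k' : ℕ) : ℤ)) * qn) = 1 := by
        have h4 : γ ^ ((((k : ℕ) : ℤ) - ((k' : ℕ) : ℤ)) * qn) * u ^ (qb * qn) = 1 := by
          rw [zpow_mul, zpow_mul, ← mul_zpow, key, one_zpow]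
        rwa [mul_comm qb qn, zpow_mul u qn qb, hun, one_zpow, mul_one] at h4
      have h5 : n ∣ (((k : ℕ) : ℤ) - ((k' : ℕ) : ℤ)) * qn := (hdvd _).mp h3
      have h6 : g ∣ (((k : ℕ) : ℤ) - ((k' : ℕ) : ℤ)) := by
        refine (mul_dvd_mul_iff_right hqn).mp ?_
        rw [hgn]; exact h5
      refine Int.eq_zero_of_abs_lt_dvd h6 ?_
      have hk1 : ((k : ℕ) : ℤ) < g := by rw [hgdef]; exact_mod_cast k.isLt
      have hk2 : ((k' : ℕ) : ℤ) < g := by rw [hgdef]; exact_mod_cast k'.isLt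
      have hk3 : (0:ℤ) ≤ ((k : ℕ) : ℤ) := Int.natCast_nonneg _
      have hk4 : (0:ℤ) ≤ ((k' : ℕ) : ℤ) := Int.natCast_nonneg _
      rw [abs_lt]; omega
    have hub : u ^ qb = 1 := by
      have hkey := key
      rw [hd0, zpow_zero, one_mul] at hkey
      exact hkey
    have hzw : z = w := by
      obtain ⟨x, y, hxy⟩ := hcop
      have hu1 : u = 1 := by
        calc u = u ^ (x * qn + y * qb) := by rw [hxy, zpow_one]
        _ = (u ^ qn) ^ x * (u ^ qb) ^ y := by
            rw [zpow_add, mul_comm x qn, mul_comm y qb, zpow_mul, zpow_mul]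
        _ = 1 := by rw [hun, hub, one_zpow, one_zpow, mul_one]
      rw [hu, div_eq_one] at hu1
      exact hu1
    have hkk' : k = k' := by
      have : ((k : ℕ) : ℤ) = ((k' : ℕ) : ℤ) := by omega
      exact Fin.ext (by exact_mod_cast this)
    rw [hkk', hzw]
  -- membership of the range in S
  have hmem : ∀ p : Fin (Int.gcd n b) × Circle, (φ p).1 ^ n = (φ p).2 ^ b := by
    rintro ⟨k, z⟩
    show (γ ^ (k : ℕ) * z ^ qb) ^ n = (z ^ qn) ^ b
    have h1 : γ ^ (((k : ℕ) : ℤ) * n) = 1 := (hdvd _).mpr ⟨(k : ℕ), mul_comm _ _⟩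
    rw [mul_zpow, ← zpow_natCast γ (k : ℕ), ← zpow_mul, h1, one_mul, ← zpow_mul, ← zpow_mul,
      ← hcomm]
  -- surjectivity
  have hsurj : ∀ zz : Circle × Circle, zz.1 ^ n = zz.2 ^ b → ∃ p, φ p = zz := by
    rintro ⟨z₁, z₂⟩ hz
    obtain ⟨w, hw⟩ := circle_zpow_surj hqn z₂
    have hw' : w ^ qn = z₂ := hw
    have hroot : (z₁ / w ^ qb) ^ n = 1 := by
      rw [div_zpow, ← zpow_mul]
      rw [show z₁ ^ n = z₂ ^ b from hz, ← hw', ← zpow_mul, hcomm, div_self']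
    have hrootN : (z₁ / w ^ qb) ^ (n.natAbs : ℕ) = 1 := by
      have h' : (z₁ / w ^ qb) ^ ((n.natAbs : ℤ)) = 1 := by
        rcases Int.natAbs_eq n with h | h
        · rw [← h]; exact hroot
        · rw [(by omega : (n.natAbs : ℤ) = -n), zpow_neg, hroot, inv_one]
      rw [← zpow_natCast]; exact h'
    obtain ⟨j, hj⟩ := circle_mem_zpowers hNz γ hγ hrootN
    obtain ⟨x, y, hxy⟩ := hcop
    set t : ℤ := j / g with ht
    set r : ℤ := j % g with hrr
    have hr0 : 0 ≤ r := Int.emod_nonneg j hgz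
    have hrg : r < g := Int.emod_lt_of_pos j hgpos
    have hjr : g * t + r = j := Int.mul_ediv_add_emod j g
    set z : Circle := w * γ ^ (g * (t * y)) with hzdef
    have hrnat : r.toNat < Int.gcd n b := by omega
    refine ⟨(⟨r.toNat, hrnat⟩, z), ?_⟩
    simp only [hφ]
    have hz2 : z ^ qn = z₂ := by
      have hgsqn : γ ^ (g * (t * y) * qn) = 1 := (hdvd _).mpr ⟨t * y, by rw [← hgn]; ring⟩
      rw [hzdef, mul_zpow, ← zpow_mul, hgsqn, mul_one, hw']
    have hz1' : γ ^ r * z ^ qb = z₁ := by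
      have hrj : γ ^ (r + g * (t * y) * qb - j) = 1 := by
        refine (hdvd _).mpr ⟨-(t * x), ?_⟩
        linear_combination hjr + (g * t) * hxy - (t * x) * hgn
      have hstep : γ ^ r * z ^ qb = γ ^ j * w ^ qb * γ ^ (r + g * (t * y) * qb - j) := by
        rw [hzdef, mul_zpow, ← zpow_mul]
        rw [mul_comm (w ^ qb) (γ ^ (g * (t * y) * qb)), ← mul_assoc, ← zpow_add]
        rw [mul_right_comm (γ ^ j) (w ^ qb), ← zpow_add]
        rw [show j + (r + g * (t * y) * qb - j) = r + g * (t * y) * qb by ring]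
      rw [hstep, hrj, mul_one, hj]
      exact div_mul_cancel z₁ _
    have hz1 : γ ^ (r.toNat : ℕ) * z ^ qb = z₁ := by
      rw [← hz1']
      congr 1
      rw [← zpow_natCast, Int.toNat_of_nonneg hr0]
    show (γ ^ ((⟨r.toNat, hrnat⟩ : Fin (Int.gcd n b)) : ℕ) * z ^ qb, z ^ qn) = (z₁, z₂)
    rw [Prod.mk.injEq]
    exact ⟨hz1, hz2⟩
  refine ⟨hinj, ?_, ?_⟩
  · ext zz
    constructor
    · rintro ⟨p, rfl⟩
      exact hmem p
    · intro hzz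
      obtain ⟨p, hp⟩ := hsurj zz hzz
      exact ⟨p, hp⟩
  · -- the homeomorphism
    have hmem' : ∀ p : Fin (Int.gcd n b) × Circle,
        φ p ∈ {z : Circle × Circle | z.1 ^ n = z.2 ^ b} := hmem
    set ψ : Fin (Int.gcd n b) × Circle → {z : Circle × Circle // z.1 ^ n = z.2 ^ b} :=
      fun p => ⟨φ p, hmem' p⟩ with hψ
    have hψbij : Function.Bijective ψ := by
      constructor
      · intro a b' h
        exact hinj (congrArg Subtype.val h)
      · rintro ⟨zz, hzz⟩
        obtain ⟨p, hp⟩ := hsurj zz hzz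
        exact ⟨p, Subtype.ext hp⟩
    have hφcont : Continuous φ := by
      refine Continuous.prodMk (Continuous.mul ?_ ?_) ?_
      · have hc : Continuous ((fun k : Fin (Int.gcd n b) => γ ^ (k : ℕ)) ∘ (Prod.fst : Fin (Int.gcd n b) × Circle → Fin (Int.gcd n b))) :=
          Continuous.comp continuous_of_discreteTopology continuous_fst
        exact hc
      · exact Continuous.comp (continuous_zpow qb) continuous_snd
      · exact Continuous.comp (continuous_zpow qn) continuous_snd
    have hψcont : Continuous ψ := Continuous.subtype_mk hφcont _
    set E : Fin (Int.gcd n b) × Circle ≃ {z : Circle × Circle // z.1 ^ n = z.2 ^ b} :=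
      Equiv.ofBijective ψ hψbij with hE
    have hEcont : Continuous E := hψcont
    refine ⟨Continuous.homeoOfEquivCompactToT2 hEcont, fun p => rfl⟩
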